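/- Let h : Σ → Σ* be a morphism and h̄ : (Σ × A) → (Σ × A)* an annotation of h. Then the dominant eigenvalue (Perron–Frobenius eigenvalue) of the incidence matrix of h equals the dominant eigenvalue of the incidence matrix of h̄. -/

import Mathlib

/-!
Let `M`, `N` be the incidence matrices of `h` and of its annotation, and let
`P b (c, a) = [b = c]`. Counting letters of `h̄ (c, a)` by their first component gives
`P * N = M * P`. Hence `P` sends a non-negative eigenvector of `N` to a (nonzero, by
non-negativity) eigenvector of `M`, so `β ≤ α`. Conversely `z ↦ z P` is injective and sends
left eigenvectors of `M` to left eigenvectors of `N`; as left and right eigenvalues coincide,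
`α` is an eigenvalue of `N`, so `α ≤ β`.
-/

/-- The incidence matrix (over ℝ) of a morphism `h`. -/
def incMatR {S : Type*} [DecidableEq S] (h : S → List S) : Matrix S S ℝ :=
  Matrix.of fun i j => ((h j).count i : ℝ)

/-- `α` is the dominant (Perron–Frobenius) eigenvalue of the non-negative matrix `M`:
it is a real eigenvalue with a non-negative eigenvector, and it dominates the absolute
value of every complex eigenvalue of `M`. -/
def IsDomEig {n : Type*} [Fintype n] [DecidableEq n] (M : Matrix n n ℝ) (α : ℝ) : Prop :=
  (∃ v : n → ℝ, v ≠ 0 ∧ (∀ i, 0 ≤ v i) ∧ M.mulVec v = α • v) ∧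
    ∀ μ : ℂ, (∃ u : n → ℂ, u ≠ 0 ∧ (M.map (Complex.ofReal ·)).mulVec u = μ • u) →
      ‖μ‖ ≤ α

open Matrix

namespace Matrix

variable {m n R : Type*} [Fintype m] [Fintype n]

theorem exists_vecMul_eq_smul_iff_exists_mulVec_eq_smul [DecidableEq n] [CommRing R] [IsDomain R]
    (M : Matrix n n R) (μ : R) :
    (∃ u ≠ 0, u ᵥ* M = μ • u) ↔ ∃ v ≠ 0, M *ᵥ v = μ • v := by
  have hl : ∀ u : n → R, u ᵥ* M = μ • u ↔ u ᵥ* (M - μ • 1) = 0 := fun u => by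
    rw [vecMul_sub, vecMul_smul, vecMul_one, sub_eq_zero]
  have hr : ∀ v : n → R, M *ᵥ v = μ • v ↔ (M - μ • 1) *ᵥ v = 0 := fun v => by
    rw [sub_mulVec, smul_mulVec, one_mulVec, sub_eq_zero]
  simp only [hl, hr, exists_vecMul_eq_zero_iff, exists_mulVec_eq_zero_iff]

theorem exists_mulVec_eq_smul_of_mul_eq_mul [DecidableEq m] [DecidableEq n] [CommRing R]
    [IsDomain R] {M : Matrix m m R} {N : Matrix n n R} {P : Matrix m n R}
    (hP : P * N = M * P) (hPinj : Function.Injective (· ᵥ* P)) {μ : R}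
    (hM : ∃ v ≠ 0, M *ᵥ v = μ • v) : ∃ w ≠ 0, N *ᵥ w = μ • w := by
  rw [← exists_vecMul_eq_smul_iff_exists_mulVec_eq_smul] at hM ⊢
  obtain ⟨z, hz0, hz⟩ := hM
  refine ⟨z ᵥ* P, fun h => hz0 (hPinj (h.trans (zero_vecMul P).symm)), ?_⟩
  rw [vecMul_vecMul, hP, ← vecMul_vecMul, hz, smul_vecMul]

end Matrix

theorem exists_complex_eigenvector {n : Type*} [Fintype n] {M : Matrix n n ℝ} {μ : ℝ}
    {v : n → ℝ} (hv0 : v ≠ 0) (hv : M *ᵥ v = μ • v) :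
    ∃ u ≠ 0, M.map (Complex.ofReal ·) *ᵥ u = (μ : ℂ) • u := by
  refine ⟨Complex.ofRealHom ∘ v, fun h => hv0 (funext fun i => ?_), funext fun i => ?_⟩
  · simpa using congrFun h i
  · refine (Complex.ofRealHom.map_mulVec M v i).symm.trans ?_
    simp [hv]

theorem IsDomEig.le_of_complex_eigenvector {n : Type*} [Fintype n] [DecidableEq n]
    {M : Matrix n n ℝ} {α μ : ℝ} (hα : IsDomEig M α)
    (hμ : ∃ u ≠ 0, M.map (Complex.ofReal ·) *ᵥ u = (μ : ℂ) • u) : μ ≤ α := by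
  have := hα.2 μ (by simpa using hμ)
  rw [Complex.norm_real, Real.norm_eq_abs] at this
  exact (le_abs_self μ).trans this

theorem List.sum_count_mk_eq_count_map_fst {S A : Type*} [Fintype A] [DecidableEq S]
    [DecidableEq (S × A)]
    (l : List (S × A)) (b : S) :
    ∑ a : A, l.count (b, a) = (l.map Prod.fst).count b := by
  classical
  induction l with
  | nil => simp
  | cons p t ih =>
    obtain ⟨c, a'⟩ := p
    simp only [List.count_cons, Finset.sum_add_distrib, ih, List.map_cons, beq_iff_eq,
      Prod.mk.injEq]
    by_cases hcb : c = b <;> simp [hcb]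

section Annotation

variable {S A : Type*} [DecidableEq S]

variable (S A) in
def fstMatrix (R : Type*) [Zero R] [One R] : Matrix S (S × A) R :=
  Matrix.of fun b p => if b = p.1 then 1 else 0

theorem fstMatrix_mulVec_apply [Fintype S] [Fintype A] {R : Type*} [NonAssocSemiring R]
    (u : S × A → R) (b : S) : (fstMatrix S A R *ᵥ u) b = ∑ a, u (b, a) := by
  simp only [fstMatrix, mulVec, dotProduct, of_apply, ite_mul, one_mul, zero_mul,
    Fintype.sum_prod_type]
  rw [Finset.sum_comm]
  simp

theorem fstMatrix_mul_apply [Fintype S] [Fintype A] {R ι : Type*} [NonAssocSemiring R]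
    (N : Matrix (S × A) ι R) (b : S) (i : ι) :
    (fstMatrix S A R * N) b i = ∑ a, N (b, a) i :=
  fstMatrix_mulVec_apply (fun p => N p i) b

theorem mul_fstMatrix_apply [Fintype S] {R ι : Type*} [NonAssocSemiring R]
    (M : Matrix ι S R) (i : ι) (p : S × A) : (M * fstMatrix S A R) i p = M i p.1 := by
  simp [fstMatrix, mul_apply]

theorem fstMatrix_map {R R' : Type*} [NonAssocSemiring R] [NonAssocSemiring R'] (f : R →+* R') :
    (fstMatrix S A R).map f = fstMatrix S A R' := by
  ext
  simp [fstMatrix, apply_ite f]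

theorem vecMul_fstMatrix {R : Type*} [NonAssocSemiring R] [Fintype S] (z : S → R) :
    z ᵥ* fstMatrix S A R = fun p => z p.1 := by
  ext p
  simp [fstMatrix, vecMul, dotProduct]

theorem vecMul_fstMatrix_injective {R : Type*} [NonAssocSemiring R] [Fintype S] [Nonempty A] :
    Function.Injective (· ᵥ* fstMatrix S A R) := fun z z' h => by
  simp only [vecMul_fstMatrix] at h
  exact funext fun b => congrFun h (b, Classical.arbitrary A)

theorem fstMatrix_mulVec_ne_zero [Fintype S] [Fintype A] {R : Type*} [Semiring R]
    [PartialOrder R] [IsOrderedAddMonoid R]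
    {u : S × A → R} (hu : ∀ p, 0 ≤ u p) (hu0 : u ≠ 0) : fstMatrix S A R *ᵥ u ≠ 0 := by
  obtain ⟨⟨b, a⟩, hba⟩ := Function.ne_iff.mp hu0
  intro h
  have := congrFun h b
  rw [fstMatrix_mulVec_apply, Pi.zero_apply,
    Finset.sum_eq_zero_iff_of_nonneg fun a _ => hu _] at this
  exact hba (this a (Finset.mem_univ a))

variable [Fintype S] [Fintype A] [DecidableEq A]

theorem fstMatrix_mul_incMatR {h : S → List S} {hb : S × A → List (S × A)}
    (hann : ∀ b a, (hb (b, a)).map Prod.fst = h b) :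
    fstMatrix S A ℝ * incMatR hb = incMatR h * fstMatrix S A ℝ := by
  ext b ⟨c, a⟩
  rw [fstMatrix_mul_apply, mul_fstMatrix_apply]
  simp [incMatR, ← hann c a, ← List.sum_count_mk_eq_count_map_fst]

theorem fstMatrix_mul_incMatR_map_ofReal {h : S → List S} {hb : S × A → List (S × A)}
    (hann : ∀ b a, (hb (b, a)).map Prod.fst = h b) :
    fstMatrix S A ℂ * (incMatR hb).map (Complex.ofReal ·) =
      (incMatR h).map (Complex.ofReal ·) * fstMatrix S A ℂ := by
  have := congrArg (·.map Complex.ofRealHom) (fstMatrix_mul_incMatR hann)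
  simp only [Matrix.map_mul, fstMatrix_map] at this
  exact this

end Annotation

/-- The dominant eigenvalue of the incidence matrix of a morphism `h` equals the
dominant eigenvalue of the incidence matrix of any annotation `hb` of `h`. -/
theorem stmt3 {S A : Type*} [Fintype S] [Fintype A] [Nonempty A]
    [DecidableEq S] [DecidableEq A]
    (h : S → List S) (hb : S × A → List (S × A))
    (hann : ∀ (b : S) (a : A), (hb (b, a)).map Prod.fst = h b)
    (α β : ℝ)
    (hα : IsDomEig (incMatR h) α)
    (hβ : IsDomEig (incMatR hb) β) :
    α = β := by
  obtain ⟨v, hv0, -, hv⟩ := hα.1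
  obtain ⟨u, hu0, hu_nonneg, hu⟩ := hβ.1
  apply le_antisymm
  · exact hβ.le_of_complex_eigenvector <|
      exists_mulVec_eq_smul_of_mul_eq_mul (fstMatrix_mul_incMatR_map_ofReal hann)
        vecMul_fstMatrix_injective (exists_complex_eigenvector hv0 hv)
  · refine hα.le_of_complex_eigenvector <|
      exists_complex_eigenvector (fstMatrix_mulVec_ne_zero hu_nonneg hu0) ?_
    rw [mulVec_mulVec, ← fstMatrix_mul_incMatR hann, ← mulVec_mulVec, hu, mulVec_smul]
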